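/- arXiv:1705.01492 — 2 statements merged into one kernel-verified Lean document; each statement's English description precedes it below -/
import Mathlib

section
/- Let Q8 denote the quaternion group of order 8 (QuaternionGroup 2 in Mathlib). For every finite symmetric generating set A of Q8, the geodesic language Geo(Q8,A) is piecewise excluding. -/
/-- `w` is a word over the alphabet `A`: every letter of `w` lies in `A`. -/
def IsWordOver {G : Type*} (A : Finset G) (w : List G) : Prop :=
  ∀ x ∈ w, x ∈ A

/-- `A` is a finite symmetric (inverse-closed) generating set of the group `G`. -/
def IsSymmGen {G : Type*} [Group G] (A : Finset G) : Prop :=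
  Subgroup.closure (A : Set G) = ⊤ ∧ ∀ a ∈ A, a⁻¹ ∈ A

/-- `w` is a geodesic word over `A`: no word over `A` of strictly smaller length
evaluates to the same element of `G`. -/
def IsGeodesic {G : Type*} [Group G] (A : Finset G) (w : List G) : Prop :=
  IsWordOver A w ∧
    ∀ v : List G, IsWordOver A v → v.prod = w.prod → w.length ≤ v.length

/-- The geodesic language of `G` over `A`. -/
def Geo {G : Type*} [Group G] (A : Finset G) : Set (List G) :=
  {w | IsGeodesic A w}

/-- A language `L` of words over `A` is piecewise excluding if there is a finite set `F`
of words over `A` such that a word `w` over `A` lies in `L` iff no element of `F` is a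
piecewise subword (i.e. a not-necessarily-contiguous subsequence) of `w`. -/
def PiecewiseExcluding {G : Type*} (A : Finset G) (L : Set (List G)) : Prop :=
  ∃ F : Finset (List G), (∀ u ∈ F, IsWordOver A u) ∧
    ∀ w : List G, IsWordOver A w → (w ∈ L ↔ ∀ u ∈ F, ¬ List.Sublist u w)

lemma noncomm_pair {G : Type*} [Group G] (A : Finset G) (hA : Subgroup.closure (A:Set G) = ⊤)
    (hna : ∃ x y : G, x*y ≠ y*x) : ∃ a ∈ A, ∃ b ∈ A, a*b ≠ b*a := by
  by_contra h
  push_neg at h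
  obtain ⟨x, y, hxy⟩ := hna
  apply hxy
  have h1 : ∀ g : G, ∀ a ∈ A, a * g = g * a := by
    intro g a ha
    have hg : g ∈ Subgroup.closure (A : Set G) := by rw [hA]; trivial
    have hle : Subgroup.closure (A:Set G) ≤ Subgroup.centralizer (A:Set G) := by
      apply Subgroup.closure_le _ |>.2
      intro b hb
      rw [SetLike.mem_coe, Subgroup.mem_centralizer_iff]
      intro c hc
      exact h c hc b hb
    have := hle hg
    rw [Subgroup.mem_centralizer_iff] at this
    exact this a ha
  have h2 : (A : Set G) ⊆ (Subgroup.center G : Set G) := by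
    intro a ha
    rw [SetLike.mem_coe, Subgroup.mem_center_iff]
    exact fun g => (h1 g a ha).symm
  have h3 : ∀ g : G, g ∈ Subgroup.center G := by
    intro g
    have : Subgroup.closure (A:Set G) ≤ Subgroup.center G := (Subgroup.closure_le _).2 h2
    exact this (by rw [hA]; trivial)
  exact (Subgroup.mem_center_iff.1 (h3 y)) x

lemma q8_key : ∀ a b g : QuaternionGroup 2, a*b ≠ b*a →
    g = 1 ∨ g = a ∨ g = a⁻¹ ∨ g = b ∨ g = b⁻¹ ∨ g = a*a ∨ g = a*b ∨ g = a*b⁻¹ := by decide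

lemma short_word (A : Finset (QuaternionGroup 2)) (hA : IsSymmGen A) (g : QuaternionGroup 2) :
    ∃ v : List (QuaternionGroup 2), IsWordOver A v ∧ v.prod = g ∧ v.length ≤ 2 := by
  obtain ⟨a, ha, b, hb, hab⟩ := noncomm_pair A hA.1 (by decide)
  have ha' := hA.2 a ha
  have hb' := hA.2 b hb
  have hw : ∀ x y : QuaternionGroup 2, x ∈ A → y ∈ A →
      ∃ v : List (QuaternionGroup 2), IsWordOver A v ∧ v.prod = x*y ∧ v.length ≤ 2 := by
    intro x y hx hy
    exact ⟨[x,y], by intro z hz; simp at hz; rcases hz with h|h <;> simp [h, hx, hy],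
      by simp, by simp⟩
  rcases q8_key a b g hab with h|h|h|h|h|h|h|h
  · exact ⟨[], by intro z hz; simp at hz, by simp [h], by simp⟩
  · exact ⟨[a], by intro z hz; simp at hz; simp [hz, ha], by simp [h], by simp⟩
  · exact ⟨[a⁻¹], by intro z hz; simp at hz; simp [hz, ha'], by simp [h], by simp⟩
  · exact ⟨[b], by intro z hz; simp at hz; simp [hz, hb], by simp [h], by simp⟩
  · exact ⟨[b⁻¹], by intro z hz; simp at hz; simp [hz, hb'], by simp [h], by simp⟩
  · rw [h]; exact hw a a ha ha
  · rw [h]; exact hw a b ha hb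
  · rw [h]; exact hw a b⁻¹ ha hb'

/-- The quaternion group `Q₈` has piecewise excluding geodesic language for every
finite symmetric generating set. -/
theorem quaternion_piecewise_excluding
    (A : Finset (QuaternionGroup 2)) (hA : IsSymmGen A) :
    PiecewiseExcluding A (Geo A) := by
  classical
  have hlen : ∀ w, IsGeodesic A w → w.length ≤ 2 := by
    intro w hw
    obtain ⟨v, hv1, hv2, hv3⟩ := short_word A hA w.prod
    exact le_trans (hw.2 v hv1 hv2) hv3
  refine ⟨((A.filter (· = 1)).image (fun a => [a])) ∪
    (((A ×ˢ A).filter (fun p => p.1*p.2 = 1 ∨ p.1*p.2 ∈ A)).image (fun p => [p.1, p.2])) ∪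
    ((A ×ˢ A ×ˢ A).image (fun p => [p.1, p.2.1, p.2.2])), ?_, ?_⟩
  · intro u hu
    simp only [Finset.mem_union, Finset.mem_image, Finset.mem_filter, Finset.mem_product] at hu
    rcases hu with (⟨a, ⟨ha, _⟩, rfl⟩ | ⟨p, ⟨⟨h1, h2⟩, _⟩, rfl⟩) | ⟨p, ⟨h1, h2, h3⟩, rfl⟩
    · intro z hz; simp at hz; simp [hz, ha]
    · intro z hz; simp at hz; rcases hz with h|h <;> simp [h, h1, h2]
    · intro z hz; simp at hz; rcases hz with h|h|h <;> simp [h, h1, h2, h3]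
  · intro w hw
    constructor
    · intro hgeo u hu hsub
      have hgeo' : IsGeodesic A w := hgeo
      have hwl := hlen w hgeo'
      have hul := hsub.length_le
      simp only [Finset.mem_union, Finset.mem_image, Finset.mem_filter, Finset.mem_product] at hu
      rcases hu with (⟨a, ⟨ha, ha1⟩, rfl⟩ | ⟨p, ⟨⟨h1, h2⟩, hcond⟩, rfl⟩) | ⟨p, _, rfl⟩
      · -- u = [a] with a = 1
        subst ha1
        have hmem : (1 : QuaternionGroup 2) ∈ w := List.singleton_sublist.1 hsub
        obtain ⟨s, t, rfl⟩ := List.append_of_mem hmem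
        have hst : IsWordOver A (s ++ t) := by
          intro z hz
          apply hw
          simp at hz ⊢
          tauto
        have := hgeo'.2 (s ++ t) hst (by simp)
        simp at this
      · -- u = [p.1, p.2] with p.1*p.2 = 1 or ∈ A
        have h2le : 2 ≤ w.length := by simpa using hul
        have hwe : w = [p.1, p.2] := (hsub.eq_of_length (by simp; omega)).symm
        subst hwe
        rcases hcond with hc | hc
        · have := hgeo'.2 [] (by intro z hz; simp at hz) (by simp [hc])
          simp at this
        · have := hgeo'.2 [p.1 * p.2] (by intro z hz; simp at hz; simp [hz, hc]) (by simp)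
          simp at this
      · simp at hul
        omega
    · intro hF
      by_contra hng
      have hex : ∃ v, IsWordOver A v ∧ v.prod = w.prod ∧ v.length < w.length := by
        have : ¬ IsGeodesic A w := hng
        unfold IsGeodesic at this
        push_neg at this
        obtain ⟨v, h1, h2, h3⟩ := this hw
        exact ⟨v, h1, h2, h3⟩
      obtain ⟨v, hv1, hv2, hv3⟩ := hex
      rcases w with _ | ⟨a, _ | ⟨b, _ | ⟨c, rest⟩⟩⟩
      · simp at hv3
      · -- w = [a]
        have hv3' : v.length < 1 := by simpa using hv3
        have hv0 : v = [] := List.length_eq_zero_iff.1 (by omega)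
        subst hv0
        simp at hv2
        have ha : a ∈ A := hw a (by simp)
        refine hF [a] ?_ (List.Sublist.refl _)
        simp only [Finset.mem_union, Finset.mem_image, Finset.mem_filter]
        exact Or.inl (Or.inl ⟨a, ⟨ha, hv2.symm⟩, rfl⟩)
      · -- w = [a, b]
        have ha : a ∈ A := hw a (by simp)
        have hb : b ∈ A := hw b (by simp)
        have hcond : a * b = 1 ∨ a * b ∈ A := by
          rcases v with _ | ⟨c, _ | ⟨d, v'⟩⟩
          · left; simpa using hv2.symm
          · right
            have hc : c ∈ A := hv1 c (by simp)
            have : c = a * b := by simpa using hv2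
            rwa [← this]
          · simp at hv3
        refine hF [a, b] ?_ (List.Sublist.refl _)
        simp only [Finset.mem_union, Finset.mem_image, Finset.mem_filter, Finset.mem_product]
        exact Or.inl (Or.inr ⟨(a, b), ⟨⟨ha, hb⟩, hcond⟩, rfl⟩)
      · -- length ≥ 3
        have ha : a ∈ A := hw a (by simp)
        have hb : b ∈ A := hw b (by simp)
        have hc : c ∈ A := hw c (by simp)
        refine hF [a, b, c] ?_ ?_
        · simp only [Finset.mem_union, Finset.mem_image, Finset.mem_product]
          exact Or.inr ⟨(a, b, c), ⟨ha, hb, hc⟩, rfl⟩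
        · exact List.take_sublist 3 (a :: b :: c :: rest)
end

section
/- Let G be the presented group on generators a, x with relators a⁵ and x a x⁻¹ a² (so G ≅ Z/5Z ⋊ Z, where conjugation by x sends a to a⁻², equivalently to a³). For every nontrivial normal subgroup N of G, the quotient G/N is either abelian, or there exists a finite symmetric generating set B of G/N such that the geodesic language Geo(G/N, B) is not piecewise excluding. -/
/-- The relators of `⟨a, x ∣ a⁵, x a x⁻¹ a²⟩ ≅ ℤ/5ℤ ⋊ ℤ`, with `a` the image of `0`
and `x` the image of `1`. -/
def z5zRels : Set (FreeGroup (Fin 2)) :=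
  {(FreeGroup.of 0) ^ 5,
   FreeGroup.of 1 * FreeGroup.of 0 * (FreeGroup.of 1)⁻¹ * (FreeGroup.of 0) ^ 2}

theorem IsWordOver.of_sublist {α : Type*} {A : Finset α} {u w : List α} (hw : IsWordOver A w)
    (huw : u.Sublist w) : IsWordOver A u :=
  fun c hc => hw c (huw.subset hc)

theorem PiecewiseExcluding.mem_of_sublist {α : Type*} {A : Finset α} {L : Set (List α)}
    (hL : PiecewiseExcluding A L) {u w : List α} (hw : IsWordOver A w) (huw : u.Sublist w)
    (hwL : w ∈ L) : u ∈ L := by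
  obtain ⟨F, -, hF⟩ := hL
  exact (hF u (hw.of_sublist huw)).2 fun f hf hfu => (hF w hw).1 hwL f hf (hfu.trans huw)

section Geodesic

variable {G H : Type*} [Group G] [Group H]

theorem isGeodesic_of_map (f : G →* H) {A : Finset G} {C : Finset H} (hAC : ∀ b ∈ A, f b ∈ C)
    {w : List G} (hw : IsWordOver A w)
    (hshort : ∀ v : List H, (∀ c ∈ v, c ∈ C) → v.length < w.length → v.prod ≠ f w.prod) :
    IsGeodesic A w := by
  refine ⟨hw, fun v hv hvw => ?_⟩
  by_contra! hlt
  refine hshort (v.map f) (by simpa using fun b hb => hAC b (hv b hb)) (by simpa using hlt) ?_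
  rw [← map_list_prod, hvw]

theorem not_isGeodesic_of_prod_eq {A : Finset G} {v w : List G} (hv : IsWordOver A v)
    (hvw : v.prod = w.prod) (hlt : v.length < w.length) : ¬ IsGeodesic A w :=
  fun hw => (hw.2 v hv hvw).not_gt hlt

end Geodesic

section Center

variable {G H : Type*} [Group G]

theorem Subgroup.le_center_of_inf_ker_eq_bot [CommGroup H] (f : G →* H) {N : Subgroup G}
    [hN : N.Normal] (h : N ⊓ f.ker = ⊥) : N ≤ Subgroup.center G := by
  intro n hn
  refine Subgroup.mem_center_iff.2 fun g => commutatorElement_eq_one_iff_mul_comm.1 ?_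
  have hc : g * n * g⁻¹ * n⁻¹ ∈ N ⊓ f.ker :=
    ⟨N.mul_mem (hN.conj_mem n hn g) (N.inv_mem hn), by simp [mul_comm (f g)]⟩
  rwa [h, Subgroup.mem_bot] at hc

theorem Subgroup.inf_zpowers_eq_bot {N : Subgroup G} {g : G} (hg : (orderOf g).Prime)
    (hgN : g ∉ N) : N ⊓ Subgroup.zpowers g = ⊥ := by
  have : Finite (Subgroup.zpowers g) := (orderOf_pos_iff.1 hg.pos).finite_zpowers
  have hdvd : Nat.card ↥(N ⊓ Subgroup.zpowers g) ∣ orderOf g :=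
    Nat.card_zpowers g ▸ Subgroup.card_dvd_of_le inf_le_right
  rcases hg.eq_one_or_self_of_dvd _ hdvd with h | h
  · exact Subgroup.card_eq_one.1 h
  · have heq : N ⊓ Subgroup.zpowers g = Subgroup.zpowers g :=
      Subgroup.eq_of_le_of_card_ge inf_le_right (by rw [Nat.card_zpowers, h])
    exact absurd (Subgroup.mem_inf.1 (heq ▸ Subgroup.mem_zpowers g)).1 hgN

end Center

section SymmGens

variable {H : Type*} [Group H] [DecidableEq H]

def symmGens (p q : H) : Finset H := {p, p⁻¹, q, q⁻¹, p * q, (p * q)⁻¹}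

theorem isSymmGen_symmGens {p q : H} (h : Subgroup.closure {p, q} = ⊤) :
    IsSymmGen (symmGens p q) := by
  refine ⟨eq_top_iff.2 (h ▸ Subgroup.closure_mono ?_), fun b hb => ?_⟩
  · simp [Set.insert_subset_iff, symmGens]
  · simp only [symmGens, Finset.mem_insert, Finset.mem_singleton] at hb ⊢
    rcases hb with rfl | rfl | rfl | rfl | rfl | rfl <;> simp

end SymmGens

namespace Z5Z

abbrev G := PresentedGroup z5zRels

def a : G := PresentedGroup.of 0
def x : G := PresentedGroup.of 1

theorem a_pow_five : a ^ 5 = 1 :=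
  (QuotientGroup.eq_one_iff _).2 (Subgroup.subset_normalClosure (Set.mem_insert _ _))

theorem x_mul_a_mul_x_inv : x * a * x⁻¹ = a ^ (-2 : ℤ) := by
  have h : x * a * x⁻¹ * a ^ 2 = 1 :=
    (QuotientGroup.eq_one_iff _).2 (Subgroup.subset_normalClosure (Set.mem_insert_of_mem _ rfl))
  rw [mul_eq_one_iff_eq_inv] at h
  rw [h, zpow_neg, zpow_ofNat]

theorem x_inv_mul_a_mul_x : x⁻¹ * a * x = a ^ (2 : ℤ) := by
  have h : x * a ^ (2 : ℤ) * x⁻¹ = a := by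
    rw [← conj_zpow, x_mul_a_mul_x_inv, ← zpow_mul, zpow_eq_zpow_emod' _ a_pow_five]
    exact zpow_one a
  calc x⁻¹ * a * x = x⁻¹ * (x * a ^ (2 : ℤ) * x⁻¹) * x := by rw [h]
    _ = a ^ (2 : ℤ) := by group

theorem exists_eq_a_zpow_mul_x_zpow (g : G) : ∃ i m : ℤ, g = a ^ i * x ^ m := by
  have hg : g ∈ Subgroup.closure (Set.range (PresentedGroup.of : Fin 2 → G)) := by
    rw [PresentedGroup.closure_range_of]; trivial
  induction hg using Subgroup.closure_induction_left with
  | one => exact ⟨0, 0, by group⟩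
  | mul_left s hs g _ ih =>
    obtain ⟨k, rfl⟩ := hs
    obtain ⟨i, m, rfl⟩ := ih
    fin_cases k
    · exact ⟨i + 1, m, by change a * _ = _; group⟩
    · refine ⟨-2 * i, m + 1, ?_⟩
      change x * _ = _
      rw [zpow_mul, ← x_mul_a_mul_x_inv, conj_zpow]
      group
  | inv_mul_cancel s hs g _ ih =>
    obtain ⟨k, rfl⟩ := hs
    obtain ⟨i, m, rfl⟩ := ih
    fin_cases k
    · exact ⟨i - 1, m, by change a⁻¹ * _ = _; group⟩
    · refine ⟨2 * i, m - 1, ?_⟩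
      change x⁻¹ * _ = _
      have h := conj_zpow (i := i) (a := x⁻¹) (b := a)
      rw [inv_inv] at h
      rw [zpow_mul, ← x_inv_mul_a_mul_x, h]
      group

section Lift

variable {H : Type*} [Group H] {α ξ : H}

def lift (h5 : α ^ 5 = 1) (hrel : ξ * α * ξ⁻¹ * α ^ 2 = 1) : G →* H :=
  PresentedGroup.toGroup (f := ![α, ξ]) (by
    rintro r (rfl | rfl)
    · simpa using h5
    · simpa using hrel)

variable (h5 : α ^ 5 = 1) (hrel : ξ * α * ξ⁻¹ * α ^ 2 = 1)

@[simp] theorem lift_a : lift h5 hrel a = α := PresentedGroup.toGroup.of _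
@[simp] theorem lift_x : lift h5 hrel x = ξ := PresentedGroup.toGroup.of _

end Lift

def xExp : G →* Multiplicative ℤ :=
  lift (α := 1) (ξ := .ofAdd 1) (one_pow 5) (by simp)

theorem ker_xExp_le : xExp.ker ≤ Subgroup.zpowers a := by
  intro g hg
  obtain ⟨i, m, rfl⟩ := exists_eq_a_zpow_mul_x_zpow g
  simp only [xExp, MonoidHom.mem_ker, map_mul, map_zpow, lift_a, one_zpow, lift_x, one_mul,
    IsMulTorsionFree.zpow_eq_one_iff, ofAdd_eq_one, one_ne_zero, false_or] at hg
  subst hg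
  simp [Subgroup.zpow_mem_zpowers a i]

theorem closure_a_x : Subgroup.closure {a, x} = ⊤ := by
  refine eq_top_iff.2 fun g _ => ?_
  obtain ⟨i, m, rfl⟩ := exists_eq_a_zpow_mul_x_zpow g
  exact mul_mem (zpow_mem (Subgroup.subset_closure (by simp)) i)
    (zpow_mem (Subgroup.subset_closure (by simp)) m)

theorem mul_comm_of_a_mem {N : Subgroup G} [N.Normal] (ha : a ∈ N) (u v : G ⧸ N) :
    u * v = v * u := by
  have hpow (w : G ⧸ N) : ∃ m : ℤ, w = (x : G ⧸ N) ^ m := by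
    obtain ⟨g, rfl⟩ := QuotientGroup.mk_surjective w
    obtain ⟨i, m, rfl⟩ := exists_eq_a_zpow_mul_x_zpow g
    exact ⟨m, by simp [(QuotientGroup.eq_one_iff a).2 ha]⟩
  obtain ⟨m, rfl⟩ := hpow u
  obtain ⟨l, rfl⟩ := hpow v
  exact Commute.zpow_zpow_self _ m l

open Equiv

def transl : Perm (ZMod 5) := Equiv.addRight 1

def dilate : Perm (ZMod 5) := ⟨(3 * ·), (2 * ·), by decide, by decide⟩

def toPerm : G →* Perm (ZMod 5) :=
  lift (α := transl) (ξ := dilate) (by decide +kernel) (by decide +kernel)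

@[simp] theorem toPerm_a : toPerm a = transl := lift_a _ _

@[simp] theorem toPerm_x : toPerm x = dilate := lift_x _ _

theorem eq_one_of_commute_transl_dilate :
    ∀ σ : Perm (ZMod 5), σ * transl = transl * σ → σ * dilate = dilate * σ → σ = 1 := by
  decide +kernel

theorem le_ker_toPerm {N : Subgroup G} [N.Normal] (ha : a ∉ N) : N ≤ toPerm.ker := by
  have : Fact (Nat.Prime 5) := ⟨Nat.prime_five⟩
  have ha1 : a ≠ 1 := fun h => by
    have := congrArg toPerm h
    rw [toPerm_a, map_one] at this
    exact absurd this (by decide +kernel)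
  have hprime : (orderOf a).Prime := orderOf_eq_prime a_pow_five ha1 ▸ Nat.prime_five
  have hcentral : N ≤ Subgroup.center G :=
    Subgroup.le_center_of_inf_ker_eq_bot xExp <| le_bot_iff.1 <|
      (inf_le_inf_left N ker_xExp_le).trans (Subgroup.inf_zpowers_eq_bot hprime ha).le
  intro n hn
  have hc := Subgroup.mem_center_iff.1 (hcentral hn)
  refine eq_one_of_commute_transl_dilate (toPerm n) ?_ ?_
  · simpa using congrArg toPerm (hc a).symm
  · simpa using congrArg toPerm (hc x).symm

theorem prod_ne_of_length_lt_three :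
    ∀ v : List (Perm (ZMod 5)), (∀ c ∈ v, c ∈ symmGens transl dilate) → v.length < 3 →
      v.prod ≠ [dilate⁻¹, (transl * dilate)⁻¹, transl⁻¹].prod
  | [], _, _ => by decide +kernel
  | [b], hv, _ => by
    simpa using (by decide +kernel : ∀ b ∈ symmGens transl dilate,
      b ≠ dilate⁻¹ * ((transl * dilate)⁻¹ * transl⁻¹)) b (hv b (by simp))
  | [b, c], hv, _ => by
    simpa using (by decide +kernel : ∀ b ∈ symmGens transl dilate, ∀ c ∈ symmGens transl dilate,
      b * c ≠ dilate⁻¹ * ((transl * dilate)⁻¹ * transl⁻¹)) b (hv b (by simp)) c (hv c (by simp))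
  | _ :: _ :: _ :: _, _, h => absurd h (by simp)

theorem not_piecewiseExcluding_geo_symmGens {H : Type*} [Group H] [DecidableEq H]
    (ψ : H →* Perm (ZMod 5)) {p q : H}
    (hp : ψ p = transl) (hq : ψ q = dilate) :
    ¬ PiecewiseExcluding (symmGens p q) (Geo (symmGens p q)) := by
  have hw : IsWordOver (symmGens p q) [q⁻¹, (p * q)⁻¹, p⁻¹] := by simp [IsWordOver, symmGens]
  have hgeo : IsGeodesic (symmGens p q) [q⁻¹, (p * q)⁻¹, p⁻¹] := by
    refine isGeodesic_of_map ψ (C := symmGens transl dilate) ?_ hw ?_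
    · intro b hb
      simp only [symmGens, Finset.mem_insert, Finset.mem_singleton] at hb
      rcases hb with rfl | rfl | rfl | rfl | rfl | rfl <;> simp [symmGens, hp, hq]
    · simpa [hp, hq] using prod_ne_of_length_lt_three
  have hsub : [q⁻¹, p⁻¹].Sublist [q⁻¹, (p * q)⁻¹, p⁻¹] := .cons_cons _ (.cons _ (.refl _))
  have hnot : ¬ IsGeodesic (symmGens p q) [q⁻¹, p⁻¹] :=
    not_isGeodesic_of_prod_eq (v := [(p * q)⁻¹]) (by simp [IsWordOver, symmGens]) (by simp)
      (by simp)
  exact fun hPE => hnot (hPE.mem_of_sublist hw hsub hgeo)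

end Z5Z

theorem z5z_proper_quotients_general
    (N : Subgroup (PresentedGroup z5zRels)) [N.Normal] :
    (∀ x y : PresentedGroup z5zRels ⧸ N, x * y = y * x) ∨
    ∃ B : Finset (PresentedGroup z5zRels ⧸ N),
      IsSymmGen B ∧ ¬ PiecewiseExcluding B (Geo B) := by
  classical
  by_cases ha : Z5Z.a ∈ N
  · exact Or.inl (Z5Z.mul_comm_of_a_mem ha)
  have hclosure : Subgroup.closure
      {(Z5Z.a : PresentedGroup z5zRels ⧸ N), (Z5Z.x : PresentedGroup z5zRels ⧸ N)} = ⊤ := by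
    rw [← QuotientGroup.coe_mk', ← Set.image_pair,
      ← MonoidHom.map_closure, Z5Z.closure_a_x,
      Subgroup.map_top_of_surjective _ (QuotientGroup.mk'_surjective N)]
  let ψ := QuotientGroup.lift N Z5Z.toPerm (Z5Z.le_ker_toPerm ha)
  exact Or.inr ⟨_, isSymmGen_symmGens hclosure,
    Z5Z.not_piecewiseExcluding_geo_symmGens ψ (by simp [ψ]) (by simp [ψ])⟩

/-- Every proper quotient of `⟨a, x ∣ a⁵, x a x⁻¹ a²⟩` is either abelian or has a finite
symmetric generating set whose geodesic language is not piecewise excluding. -/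
theorem z5z_proper_quotients
    (N : Subgroup (PresentedGroup z5zRels)) [N.Normal] (hN : N ≠ ⊥) :
    (∀ x y : PresentedGroup z5zRels ⧸ N, x * y = y * x) ∨
    ∃ B : Finset (PresentedGroup z5zRels ⧸ N),
      IsSymmGen B ∧ ¬ PiecewiseExcluding B (Geo B) :=
  z5z_proper_quotients_general N
end
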